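/- arXiv:2309.04268 — 2 statements merged into one kernel-verified Lean document; each statement's English description precedes it below -/
import Mathlib

section
/- There exists an absolute constant C > 0 such that for every integer p that is either 1 or a positive even number there is a constant D(p) (depending only on p) with the property that for every integer d ≥ D(p): ν_d(p) · Σ_{k=0}^p N(d,k) ≤ C · p^(−3/2). -/
open Real Filter

/-- Distinct eigenvalues (up to constants) of the NTK on the sphere `S^d`:
`ν_d(k) = d^d · k^(k−2) · (k+d)^(−(k+d+1)) · (k² + k·d + d)`. -/
noncomputable def nuNT (d k : ℕ) : ℝ :=
  (d : ℝ) ^ (d : ℝ) * (k : ℝ) ^ ((k : ℝ) - 2) *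
    ((k : ℝ) + (d : ℝ)) ^ (-((k : ℝ) + (d : ℝ) + 1)) *
    ((k : ℝ) ^ 2 + (k : ℝ) * (d : ℝ) + (d : ℝ))

/-- Dimension of the space of spherical harmonics of degree `k` on `S^d ⊆ ℝ^(d+1)`. -/
def Nsph (d k : ℕ) : ℕ :=
  if k = 0 then 1
  else (k + d).choose k - (if 2 ≤ k then (k + d - 2).choose (k - 2) else 0)

/-- `λ_d(0) = 1` and `λ_d(k) = ν_d(k)` for `k ≥ 1`. -/
noncomputable def lamNT (d k : ℕ) : ℝ := if k = 0 then 1 else nuNT d k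

/-! The partial sums of `N(d, k)` telescope to `C(p+d, p) + C(p+d-1, p-1) ≤ 2 (p+d)^p / p!`.
In `ν_d(p) · (p+d)^p` the factor `(d / (p+d))^d` is at most `e^{1-p}` once `d ≥ p²`, which cancels
the `e^p` of Stirling's lower bound `p! ≥ √p p^p e^{-p}`; what remains is
`e (p+1) p^{-5/2} ≤ 2e p^{-3/2}`. -/

theorem choose_le_choose_succ_succ (n k : ℕ) : n.choose k ≤ (n + 1).choose (k + 1) :=
  (Nat.choose_succ_succ n k).symm ▸ Nat.le_add_right _ _

theorem sum_range_Nsph (d p : ℕ) :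
    ∑ k ∈ Finset.range (p + 2), Nsph d k = (p + 1 + d).choose (p + 1) + (p + d).choose p := by
  induction p with
  | zero => simp [Nsph, Finset.sum_range_succ]; omega
  | succ p ih =>
    have hNsph : Nsph d (p + 2) = (p + 2 + d).choose (p + 2) - (p + d).choose p := by
      simp only [Nsph, if_neg (by omega : p + 2 ≠ 0), if_pos (by omega : 2 ≤ p + 2)]
      congr 2; omega
    have hmono : (p + d).choose p ≤ (p + 2 + d).choose (p + 2) := by
      rw [show p + 2 + d = p + d + 1 + 1 by omega]
      exact (choose_le_choose_succ_succ _ _).trans (choose_le_choose_succ_succ _ _)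
    rw [Finset.sum_range_succ, ih, hNsph, show p + 1 + 1 + d = p + 2 + d by omega,
      show p + 1 + 1 = p + 2 from rfl]
    omega

theorem sum_range_Nsph_le (d : ℕ) {p : ℕ} (hp : 0 < p) :
    ∑ k ∈ Finset.range (p + 1), (Nsph d k : ℝ) ≤ 2 * ((p : ℝ) + d) ^ p / p.factorial := by
  obtain ⟨q, rfl⟩ : ∃ q, p = q + 1 := ⟨p - 1, by omega⟩
  have hsum : ∑ k ∈ Finset.range (q + 1 + 1), Nsph d k ≤ 2 * (q + 1 + d).choose (q + 1) := by
    have := choose_le_choose_succ_succ (q + d) q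
    rw [sum_range_Nsph, show q + 1 + d = q + d + 1 by omega]
    omega
  have hchoose := Nat.choose_le_pow_div (α := ℝ) (q + 1) (q + 1 + d)
  push_cast at hchoose
  rw [← Nat.cast_sum, mul_div_assoc]
  calc (↑(∑ k ∈ Finset.range (q + 1 + 1), Nsph d k) : ℝ)
      ≤ 2 * ((q + 1 + d).choose (q + 1) : ℝ) := by exact_mod_cast hsum
    _ ≤ _ := by push_cast; gcongr

theorem div_add_rpow_le_exp {x y : ℝ} (hx : 0 ≤ x) (hy : 0 < y) :
    (y / (x + y)) ^ y ≤ Real.exp (-(x * y / (x + y))) := by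
  have h₁ : y / (x + y) = 1 - x / (x + y) := by field_simp; ring
  calc (y / (x + y)) ^ y ≤ Real.exp (-(x / (x + y))) ^ y := by
        gcongr
        rw [h₁]; exact Real.one_sub_le_exp_neg _
    _ = Real.exp (-(x * y / (x + y))) := by rw [← Real.exp_mul]; ring_nf

theorem sqrt_mul_pow_mul_exp_neg_le_factorial (n : ℕ) :
    √n * (n : ℝ) ^ n * Real.exp (-n) ≤ n.factorial := by
  calc √n * (n : ℝ) ^ n * Real.exp (-n) = √n * ((n : ℝ) / Real.exp 1) ^ n := by
        rw [div_pow, Real.exp_one_pow, Real.exp_neg]; ring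
    _ ≤ √(2 * π * n) * ((n : ℝ) / Real.exp 1) ^ n := by
        gcongr; nlinarith [Real.pi_gt_three, (n.cast_nonneg : (0 : ℝ) ≤ n)]
    _ ≤ n.factorial := Stirling.le_factorial_stirling n

theorem nuNT_nonneg (d k : ℕ) : 0 ≤ nuNT d k := by
  unfold nuNT
  positivity

theorem nuNT_mul_pow_eq (d : ℕ) {p : ℕ} (hp : 0 < p) :
    nuNT d p * ((p : ℝ) + d) ^ p = ((d : ℝ) / (p + d)) ^ (d : ℝ) * ((p : ℝ) ^ p / (p : ℝ) ^ 2) *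
      (((p : ℝ) ^ 2 + p * d + d) / (p + d)) := by
  have hP : (0 : ℝ) < p := by exact_mod_cast hp
  have hPQ : (0 : ℝ) < p + d := by positivity
  have hsplit : ((p : ℝ) + d) ^ (-((p : ℝ) + d + 1)) =
      (((p : ℝ) + d) ^ p * ((p : ℝ) + d) ^ (d : ℝ) * (p + d))⁻¹ := by
    rw [Real.rpow_neg hPQ.le, Real.rpow_add hPQ, Real.rpow_add hPQ, Real.rpow_natCast,
      Real.rpow_one]
  unfold nuNT
  rw [Real.rpow_sub hP, Real.rpow_natCast (p : ℝ) p, Real.rpow_two, hsplit,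
    Real.div_rpow (Nat.cast_nonneg d) hPQ.le]
  field_simp

theorem rpow_neg_three_halves (x : ℝ) (hx : 0 < x) : x ^ (-(3 / 2 : ℝ)) = (x * √x)⁻¹ := by
  rw [Real.rpow_neg hx.le, Real.sqrt_eq_rpow, show (3 / 2 : ℝ) = 1 + 1 / 2 by norm_num,
    Real.rpow_add hx, Real.rpow_one]

theorem nuNT_mul_pow_div_factorial_le {d p : ℕ} (hp : 0 < p) (hd : p ^ 2 ≤ d) :
    nuNT d p * (((p : ℝ) + d) ^ p / p.factorial) ≤ 2 * Real.exp 1 * (p : ℝ) ^ (-(3 / 2 : ℝ)) := by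
  have hP : (0 : ℝ) < p := by exact_mod_cast hp
  have hPd : (p : ℝ) ^ 2 ≤ d := by exact_mod_cast hd
  have hQ : (0 : ℝ) < d := by nlinarith
  have hPQ : (0 : ℝ) < p + d := by positivity
  have hbase : ((d : ℝ) / (p + d)) ^ (d : ℝ) ≤ Real.exp 1 * Real.exp (-p) := by
    refine (div_add_rpow_le_exp hP.le hQ).trans ?_
    rw [← Real.exp_add, Real.exp_le_exp, neg_le, le_div_iff₀ hPQ]
    nlinarith
  have hquot : ((p : ℝ) ^ 2 + p * d + d) / (p + d) ≤ p + 1 := by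
    rw [div_le_iff₀ hPQ]; nlinarith
  calc nuNT d p * (((p : ℝ) + d) ^ p / p.factorial)
      = ((d : ℝ) / (p + d)) ^ (d : ℝ) * ((p : ℝ) ^ p / (p : ℝ) ^ 2) *
          (((p : ℝ) ^ 2 + p * d + d) / (p + d)) / p.factorial := by
        rw [← nuNT_mul_pow_eq d hp, mul_div_assoc]
    _ ≤ Real.exp 1 * Real.exp (-p) * ((p : ℝ) ^ p / (p : ℝ) ^ 2) * (p + 1) /
          (√p * (p : ℝ) ^ p * Real.exp (-p)) := by
        gcongr
        exact sqrt_mul_pow_mul_exp_neg_le_factorial p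
    _ = Real.exp 1 * ((p + 1) / p) * (p * √p)⁻¹ := by
        field_simp
    _ ≤ Real.exp 1 * 2 * (p * √p)⁻¹ := by
        gcongr
        rw [div_le_iff₀ hP]; linarith [(Nat.one_le_cast (α := ℝ)).mpr hp]
    _ = 2 * Real.exp 1 * (p : ℝ) ^ (-(3 / 2 : ℝ)) := by
        rw [rpow_neg_three_halves _ hP]; ring

/-- An absolute constant C > 0 such that for every p that is 1 or positive even and all
large d: ν_d(p) · Σ_{k=0}^p N(d,k) ≤ C·p^(−3/2). -/
theorem nuNT_mul_sum_Nsph_le :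
    ∃ C : ℝ, 0 < C ∧
      ∀ p : ℕ, (p = 1 ∨ (Even p ∧ 0 < p)) → ∃ D : ℕ, ∀ d : ℕ, D ≤ d →
        nuNT d p * ∑ k ∈ Finset.range (p + 1), (Nsph d k : ℝ) ≤
          C * (p : ℝ) ^ (-(3 / 2 : ℝ)) := by
  refine ⟨4 * Real.exp 1, by positivity, fun p hp => ⟨p ^ 2, fun d hd => ?_⟩⟩
  have hp₀ : 0 < p := by rcases hp with rfl | ⟨-, hp⟩ <;> omega
  calc nuNT d p * ∑ k ∈ Finset.range (p + 1), (Nsph d k : ℝ)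
      ≤ nuNT d p * (2 * ((p : ℝ) + d) ^ p / p.factorial) := by
        gcongr
        · exact nuNT_nonneg d p
        · exact sum_range_Nsph_le d hp₀
    _ = 2 * (nuNT d p * (((p : ℝ) + d) ^ p / p.factorial)) := by ring
    _ ≤ 2 * (2 * Real.exp 1 * (p : ℝ) ^ (-(3 / 2 : ℝ))) :=
        mul_le_mul_of_nonneg_left (nuNT_mul_pow_div_factorial_le hp₀ hd) zero_le_two
    _ = 4 * Real.exp 1 * (p : ℝ) ^ (-(3 / 2 : ℝ)) := by ring
end

section
/- There exist an absolute constant C > 0 and an absolute constant D such that for every integer d ≥ D and every integer k ≥ d^(1.01): N(d,k) · ν_d(k) ≤ C · d^(1/2) · k^(−2). -/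
open Real Filter

/-!
The harmonic dimension satisfies `N(d,k) ≤ (2d/k) · C(k+d, k)`, and two-sided Stirling bounds
give `C(k+d, k) ≲ √((k+d)/(k d)) · (k+d)^(k+d) / (k^k d^d)`, which is `≲ d^(-1/2) · …` once
`d ≤ k`. The entropy factor `(k+d)^(k+d) / (k^k d^d)` cancels exactly against the powers in
`ν_d(k)`, leaving
`N(d,k) ν_d(k) ≲ √d / k² · (k² + kd + d) / (k(k+d))`, and the last quotient is at most `2`.
-/

open scoped Nat

theorem Stirling.factorial_le_exp_one_mul_sqrt {n : ℕ} (hn : n ≠ 0) :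
    (n ! : ℝ) ≤ exp 1 * √n * (n / exp 1) ^ n := by
  obtain ⟨m, rfl⟩ := Nat.exists_eq_succ_of_ne_zero hn
  have hseq : stirlingSeq (m + 1) ≤ exp 1 / √2 := by
    simpa [Stirling.stirlingSeq_one] using Stirling.stirlingSeq'_antitone (Nat.zero_le m)
  have hpos : (0 : ℝ) < √(2 * (m + 1 : ℕ)) * ((m + 1 : ℕ) / exp 1) ^ (m + 1) := by positivity
  rw [Stirling.stirlingSeq, div_le_iff₀ hpos, Real.sqrt_mul zero_le_two] at hseq
  refine hseq.trans_eq ?_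
  field_simp

theorem Nat.cast_add_choose_le_stirling {a b : ℕ} (ha : a ≠ 0) (hb : b ≠ 0) :
    ((a + b).choose a : ℝ) ≤
      exp 1 / (2 * π) * (√(a + b) / (√a * √b)) * ((a + b) ^ (a + b) / (a ^ a * b ^ b)) := by
  have hupper : ((a + b)! : ℝ) ≤ exp 1 * √(a + b : ℕ) * ((a + b : ℕ) / exp 1) ^ (a + b) :=
    Stirling.factorial_le_exp_one_mul_sqrt (by omega)
  have hlower : √(2 * π * a) * (a / exp 1) ^ a * (√(2 * π * b) * (b / exp 1) ^ b) ≤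
      (a ! * b ! : ℝ) :=
    mul_le_mul (Stirling.le_factorial_stirling a) (Stirling.le_factorial_stirling b)
      (by positivity) (by positivity)
  rw [Nat.cast_add_choose, div_le_iff₀ (by positivity)]
  refine hupper.trans (le_of_eq_of_le ?_ (mul_le_mul_of_nonneg_left hlower (by positivity)))
  have ha' : (0 : ℝ) < a := by positivity
  have hb' : (0 : ℝ) < b := by positivity
  have h2π : (0 : ℝ) ≤ 2 * π := by positivity
  have hπ : √(2 * π) * √(2 * π) = 2 * π := Real.mul_self_sqrt h2π
  rw [Real.sqrt_mul h2π, Real.sqrt_mul h2π, div_pow, div_pow, div_pow, pow_add (exp 1)]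
  generalize √(2 * π) = s at hπ
  push_cast
  field_simp
  rw [← hπ]
  ring

theorem Nat.add_two_mul_add_one_mul_choose (n k : ℕ) :
    (n + 2) * (n + 1) * n.choose k = (k + 2) * (k + 1) * (n + 2).choose (k + 2) := by
  have h1 := Nat.add_one_mul_choose_eq n k
  have h2 := Nat.add_one_mul_choose_eq (n + 1) (k + 1)
  calc (n + 2) * (n + 1) * n.choose k = (n + 2) * (n + 1).choose (k + 1) * (k + 1) := by
        rw [mul_assoc, h1, mul_assoc]
    _ = _ := by rw [h2]; ring

theorem Nsph_add_two (d m : ℕ) :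
    Nsph d (m + 2) = (m + d + 2).choose (m + 2) - (m + d).choose m := by
  simp only [Nsph, if_neg (Nat.add_one_ne_zero _), if_pos (Nat.le_add_left 2 m),
    Nat.add_sub_cancel]
  rw [Nat.add_right_comm, Nat.add_sub_cancel]

theorem mul_Nsph_le {d k : ℕ} (hk : 2 ≤ k) : k * Nsph d k ≤ 2 * d * (k + d).choose k := by
  obtain ⟨m, rfl⟩ := Nat.exists_eq_add_of_le' hk
  have hid := Nat.add_two_mul_add_one_mul_choose (m + d) m
  rw [Nsph_add_two, Nat.mul_sub, Nat.sub_le_iff_le_add, show m + 2 + d = m + d + 2 by ring]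
  set C := (m + d + 2).choose (m + 2)
  refine Nat.le_of_mul_le_mul_left (c := (m + d + 2) * (m + d + 1)) ?_ (by positivity)
  -- the difference of the two sides is `d (3md + 2d² - m + 4d - 2)`
  have hpoly : (m + 2) * ((m + d + 2) * (m + d + 1)) ≤
      2 * d * ((m + d + 2) * (m + d + 1)) + (m + 2) * ((m + 2) * (m + 1)) := by
    rcases d with _ | e
    · simp
    · ring_nf; nlinarith
  calc (m + d + 2) * (m + d + 1) * ((m + 2) * C)
      = C * ((m + 2) * ((m + d + 2) * (m + d + 1))) := by ring
    _ ≤ C * (2 * d * ((m + d + 2) * (m + d + 1)) + (m + 2) * ((m + 2) * (m + 1))) :=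
        Nat.mul_le_mul_left C hpoly
    _ = (m + d + 2) * (m + d + 1) * (2 * d * C) + (m + 2) * ((m + 2) * (m + 1) * C) := by ring
    _ = _ := by rw [← hid]; ring

theorem nuNT_eq {d k : ℕ} (hk : k ≠ 0) :
    nuNT d k = d ^ d * k ^ k * (k ^ 2 + k * d + d) / (k ^ 2 * (k + d) ^ (k + d + 1)) := by
  have hk' : (0 : ℝ) < k := by positivity
  rw [nuNT, Real.rpow_natCast, Real.rpow_sub hk', Real.rpow_natCast, Real.rpow_two,
    Real.rpow_neg (by positivity), show (k : ℝ) + d + 1 = (k + d + 1 : ℕ) by push_cast; ring,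
    Real.rpow_natCast]
  field_simp

theorem Nsph_mul_nuNT_le {d k : ℕ} (hd : d ≠ 0) (hk : 2 ≤ k) (hdk : d ≤ k) :
    (Nsph d k : ℝ) * nuNT d k ≤ 3 * √d / k ^ 2 := by
  have hk0 : k ≠ 0 := by omega
  have hkpos : (0 : ℝ) < k := by positivity
  have hdpos : (0 : ℝ) < d := by positivity
  have hN : (Nsph d k : ℝ) ≤ 2 * d / k * (k + d).choose k := by
    rw [div_mul_eq_mul_div, le_div_iff₀ hkpos, mul_comm]
    exact_mod_cast mul_Nsph_le (d := d) hk
  have hC := Nat.cast_add_choose_le_stirling hk0 hd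
  have hν : 0 ≤ nuNT d k := by rw [nuNT_eq hk0]; positivity
  have hdk' : (d : ℝ) ≤ k := by exact_mod_cast hdk
  have hsqrt : √(k + d) / √k ≤ 3 / 2 := by
    rw [← Real.sqrt_div' _ hkpos.le, Real.sqrt_le_left (by norm_num), div_le_iff₀ hkpos]
    linarith
  have hQ : ((k : ℝ) ^ 2 + k * d + d) / (k * (k + d)) ≤ 2 := by
    have hk1 : (1 : ℝ) ≤ k := by exact_mod_cast Nat.one_le_iff_ne_zero.mpr hk0
    rw [div_le_iff₀ (by positivity)]
    nlinarith
  have hc : exp 1 / (2 * π) ≤ 1 / 2 := by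
    rw [div_le_iff₀ (by positivity)]
    linarith [exp_one_lt_d9, pi_gt_three]
  calc (Nsph d k : ℝ) * nuNT d k
      ≤ 2 * d / k * (exp 1 / (2 * π) * (√(k + d) / (√k * √d)) *
          ((k + d) ^ (k + d) / (k ^ k * d ^ d))) * nuNT d k := by
        gcongr
        exact hN.trans (by gcongr)
    _ = 2 * (exp 1 / (2 * π)) * (√(k + d) / √k) * (((k : ℝ) ^ 2 + k * d + d) / (k * (k + d))) *
          √d / k ^ 2 := by
        rw [nuNT_eq hk0]
        field_simp
        rw [Real.sq_sqrt hdpos.le, pow_succ]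
        ring
    _ ≤ 2 * (1 / 2) * (3 / 2) * 2 * √d / k ^ 2 := by gcongr
    _ = 3 * √d / k ^ 2 := by ring

/-- An absolute constant C > 0 and D such that for all d ≥ D and all integers k ≥ d^1.01:
N(d,k)·ν_d(k) ≤ C·d^(1/2)·k^(−2). -/
theorem Nsph_mul_nuNT_bound_large_k :
    ∃ C : ℝ, 0 < C ∧ ∃ D : ℕ, ∀ d : ℕ, D ≤ d →
      ∀ k : ℕ, (d : ℝ) ^ (1.01 : ℝ) ≤ (k : ℝ) →
        (Nsph d k : ℝ) * nuNT d k ≤ C * (d : ℝ) ^ (1 / 2 : ℝ) * (k : ℝ) ^ (-(2 : ℝ)) := by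
  refine ⟨3, by norm_num, 2, fun d hd k hk => ?_⟩
  have hdk : d ≤ k := by
    have hd1 : (1 : ℝ) ≤ d := by exact_mod_cast (by omega : 1 ≤ d)
    exact_mod_cast (Real.self_le_rpow_of_one_le hd1 (by norm_num)).trans hk
  rw [← Real.sqrt_eq_rpow, Real.rpow_neg (Nat.cast_nonneg k), Real.rpow_two, ← div_eq_mul_inv]
  exact Nsph_mul_nuNT_le (by omega) (by omega) hdk
end
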